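/- Let p be an odd prime, a a quadratic non-residue mod p, and f(x) = x_1² − a x_2² − p x_3² + a p x_4². Then for Re(α) > 2, Z(α) := ∫_{Z_p⁴∖{0}} |f(x)|_p^{α−2} d⁴x converges and equals (1 − p^{−2})/(1 − p^{−α}). -/

import Mathlib

open MeasureTheory Complex Classical Filter

variable (p : ℕ) [Fact p.Prime]

noncomputable instance : MeasurableSpace ℚ_[p] := borel _
instance : BorelSpace ℚ_[p] := ⟨rfl⟩
noncomputable instance (n : ℕ) : MeasurableSpace (Fin n → ℚ_[p]) := borel _
instance (n : ℕ) : BorelSpace (Fin n → ℚ_[p]) := ⟨rfl⟩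

/-- Haar measure on `ℚ_p` normalized so that `ℤ_p` (the closed unit ball) has measure 1. -/
noncomputable def haarQ : Measure ℚ_[p] :=
  Measure.addHaarMeasure ⟨⟨Metric.closedBall 0 1, isCompact_closedBall 0 1⟩,
    ⟨0, mem_interior_iff_mem_nhds.2 (Metric.closedBall_mem_nhds 0 one_pos)⟩⟩

/-- Haar measure on `ℚ_p^n` normalized so that `ℤ_p^n` has measure 1. -/
noncomputable def haarQn (n : ℕ) : Measure (Fin n → ℚ_[p]) :=
  Measure.addHaarMeasure ⟨⟨Metric.closedBall 0 1, isCompact_closedBall 0 1⟩,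
    ⟨0, mem_interior_iff_mem_nhds.2 (Metric.closedBall_mem_nhds 0 one_pos)⟩⟩

/-- The p-adic fractional part of `x` : the unique rational of the form `z / p^n`
lying in `[0,1)` with `x - r ∈ ℤ_p`. -/
noncomputable def padicFract (x : ℚ_[p]) : ℚ :=
  if h : ∃ r : ℚ, (∃ (z : ℤ) (n : ℕ), r = (z : ℚ) / (p : ℚ) ^ n) ∧ 0 ≤ r ∧ r < 1 ∧
      ‖x - (r : ℚ_[p])‖ ≤ 1 then h.choose else 0

/-- The standard additive character `χ(y) = exp(2 π i {y}_p)` of `ℚ_p`. -/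
noncomputable def stdChar (y : ℚ_[p]) : ℂ :=
  Complex.exp (2 * Real.pi * Complex.I * (padicFract p y : ℂ))

/-- A Bruhat–Schwartz (test) function: locally constant with compact support. -/
def IsBruhatSchwartz {E : Type*} [TopologicalSpace E] (φ : E → ℂ) : Prop :=
  IsLocallyConstant φ ∧ HasCompactSupport φ

/-- Fourier transform on `ℚ_p`. -/
noncomputable def fourier1 (φ : ℚ_[p] → ℂ) (ξ : ℚ_[p]) : ℂ :=
  ∫ x, stdChar p (-(ξ * x)) * φ x ∂haarQ p

/-- Fourier transform on `ℚ_p^n`. -/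
noncomputable def fourierN (n : ℕ) (φ : (Fin n → ℚ_[p]) → ℂ) (ξ : Fin n → ℚ_[p]) : ℂ :=
  ∫ x, stdChar p (-(∑ i, ξ i * x i)) * φ x ∂haarQn p n

/-- Inverse Fourier transform on `ℚ_p^n`. -/
noncomputable def fourierInvN (n : ℕ) (φ : (Fin n → ℚ_[p]) → ℂ) (x : Fin n → ℚ_[p]) : ℂ :=
  ∫ ξ, stdChar p (∑ i, x i * ξ i) * φ ξ ∂haarQn p n

/-- The elliptic quadratic form `f(x) = x₁² - a x₂² - p x₃² + a p x₄²`. -/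
noncomputable def Qf (a : ℤ) (x : Fin 4 → ℚ_[p]) : ℚ_[p] :=
  x 0 ^ 2 - (a : ℚ_[p]) * x 1 ^ 2 - (p : ℚ_[p]) * x 2 ^ 2 + (a : ℚ_[p]) * (p : ℚ_[p]) * x 3 ^ 2

/-- The dual elliptic quadratic form `f°(x) = a p x₁² - p x₂² - a x₃² + x₄²`. -/
noncomputable def QfCirc (a : ℤ) (x : Fin 4 → ℚ_[p]) : ℚ_[p] :=
  (a : ℚ_[p]) * (p : ℚ_[p]) * x 0 ^ 2 - (p : ℚ_[p]) * x 1 ^ 2 - (a : ℚ_[p]) * x 2 ^ 2 + x 3 ^ 2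

/-!
`f = N(x₀, x₁) - p N(x₂, x₃)`, where `N(u, v) = u² - a v²` is the norm form of the unramified
quadratic extension of `ℚ_p`, so `|N(u, v)| = max(|u|, |v|)²`. The two summands of `f` have
norms in `p^{2ℤ}` and `p^{2ℤ+1}` respectively, hence never cancel, and
`|f(x)| = max(max(|x₀|, |x₁|)², p⁻¹ max(|x₂|, |x₃|)²)`. Consequently the sublevel set
`{|f| ≤ p⁻ⁿ}` is a box with volume `p^{-2n}`, the level set `{|f| = p⁻ⁿ}` has volume
`(1 - p⁻²) p^{-2n}`, and summing `|f|^{α-2}` over the level sets gives the geometric series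
`(1 - p⁻²) ∑ p^{-nα}`.
-/

open Metric Set
open scoped ENNReal Pointwise

lemma one_lt_cast_prime : (1 : ℝ) < p := by
  exact_mod_cast (Fact.out : p.Prime).one_lt

lemma Finset.prod_zpow_eq_zpow_sum {G₀ ι : Type*} [CommGroupWithZero G₀] {a : G₀} (ha : a ≠ 0)
    (s : Finset ι) (f : ι → ℤ) : ∏ i ∈ s, a ^ f i = a ^ ∑ i ∈ s, f i := by
  induction s using Finset.cons_induction with
  | empty => simp
  | cons i s hi ih => rw [Finset.prod_cons, Finset.sum_cons, ih, zpow_add₀ ha]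

lemma ENNReal.ofReal_natCast_zpow_add_one {n : ℕ} (hn : n ≠ 0) (e : ℤ) :
    ENNReal.ofReal ((n : ℝ) ^ (e + 1)) = n * ENNReal.ofReal ((n : ℝ) ^ e) := by
  rw [zpow_add_one₀ (Nat.cast_ne_zero.2 hn), mul_comm, ENNReal.ofReal_mul (by positivity),
    ENNReal.ofReal_natCast]

lemma Complex.ofReal_pow_cpow {r : ℝ} (hr : 0 ≤ r) (n : ℕ) (s : ℂ) :
    ((r ^ n : ℝ) : ℂ) ^ s = ((r : ℂ) ^ s) ^ n := by
  induction n with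
  | zero => simp
  | succ n ih =>
    rw [pow_succ, Complex.ofReal_mul, mul_cpow_ofReal_nonneg (by positivity) hr, ih, pow_succ]

lemma Complex.ofReal_zpow_neg_natCast_cpow {r : ℝ} (hr : 0 ≤ r) (n : ℕ) (s : ℂ) :
    ((r ^ (-(n : ℤ)) : ℝ) : ℂ) ^ s = (((r : ℂ) ^ s) ^ n)⁻¹ := by
  rw [zpow_neg, zpow_natCast, Complex.ofReal_inv, Complex.inv_cpow_ofReal_nonneg (by positivity),
    Complex.ofReal_pow_cpow hr]

section

variable {p}

lemma Padic.closedBall_zero_one_eq_biUnion :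
    closedBall (0 : ℚ_[p]) 1 = ⋃ j ∈ Finset.range p, closedBall (j : ℚ_[p]) (p : ℝ)⁻¹ := by
  ext z
  simp only [mem_iUnion, Finset.mem_range, exists_prop, mem_closedBall, dist_eq_norm, sub_zero]
  constructor
  · intro hz
    obtain ⟨j, hjp, hj⟩ := PadicInt.exists_mem_range ⟨z, hz⟩
    rw [IsLocalRing.mem_maximalIdeal, PadicInt.mem_nonunits] at hj
    have hj' : ‖z - (j : ℚ_[p])‖ < 1 := by exact_mod_cast hj
    refine ⟨j, hjp, ?_⟩
    simpa using (Padic.norm_le_pow_iff_norm_lt_pow_add_one (z - (j : ℚ_[p])) (-1)).2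
      (by simpa using hj')
  · rintro ⟨j, -, hj⟩
    calc ‖z‖ = ‖(z - j) + j‖ := by rw [sub_add_cancel]
      _ ≤ max ‖z - j‖ ‖(j : ℚ_[p])‖ := Padic.nonarchimedean _ _
      _ ≤ 1 := max_le (hj.trans (inv_le_one_of_one_le₀ (one_lt_cast_prime p).le))
                (by exact_mod_cast Padic.norm_int_le_one j)

lemma Padic.pairwiseDisjoint_closedBall_natCast :
    (Finset.range p : Set ℕ).PairwiseDisjoint fun j => closedBall (j : ℚ_[p]) (p : ℝ)⁻¹ := by
  intro j hj j' hj' hne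
  refine Set.disjoint_left.2 fun z hz hz' => hne ?_
  have hlt : ‖((j - j' : ℤ) : ℚ_[p])‖ < 1 := by
    calc ‖((j - j' : ℤ) : ℚ_[p])‖ = dist (j : ℚ_[p]) j' := by push_cast; rw [dist_eq_norm]
      _ ≤ max (dist (j : ℚ_[p]) z) (dist z j') := IsUltrametricDist.dist_triangle_max _ _ _
      _ ≤ (p : ℝ)⁻¹ := max_le (dist_comm z (j : ℚ_[p]) ▸ hz) hz'
      _ < 1 := inv_lt_one_of_one_lt₀ (one_lt_cast_prime p)
  simp only [Finset.coe_range, Set.mem_Iio] at hj hj'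
  have := Int.eq_zero_of_abs_lt_dvd (Padic.norm_intCast_lt_one_iff.1 hlt)
    (by rw [abs_lt]; constructor <;> omega)
  omega

lemma Padic.norm_eq_zpow_iff (u : ℚ_[p]) (e : ℤ) :
    ‖u‖ = (p : ℝ) ^ e ↔ ‖u‖ ≤ (p : ℝ) ^ e ∧ ¬‖u‖ ≤ (p : ℝ) ^ (e - 1) := by
  rw [Padic.norm_le_pow_iff_norm_lt_pow_add_one u (e - 1), sub_add_cancel, not_lt, le_antisymm_iff]

lemma Padic.exists_norm_eq_zpow_neg {u : ℚ_[p]} (hu : u ≠ 0) (h1 : ‖u‖ ≤ 1) :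
    ∃ n : ℕ, ‖u‖ = (p : ℝ) ^ (-(n : ℤ)) := by
  rw [Padic.norm_eq_zpow_neg_valuation hu] at h1 ⊢
  have hv : 0 ≤ u.valuation := by
    have := (zpow_le_one_iff_right₀ (one_lt_cast_prime p)).1 h1
    omega
  exact ⟨u.valuation.toNat, by rw [Int.toNat_of_nonneg hv]⟩

lemma Padic.norm_sq_le_zpow_iff (u : ℚ_[p]) (e : ℤ) :
    ‖u‖ ^ 2 ≤ (p : ℝ) ^ e ↔ ‖u‖ ≤ (p : ℝ) ^ (e / 2) := by
  rcases eq_or_ne u 0 with rfl | hu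
  · simp only [norm_zero, ne_eq, OfNat.ofNat_ne_zero, not_false_eq_true, zero_pow]
    constructor <;> intro <;> positivity
  rw [Padic.norm_eq_zpow_neg_valuation hu, ← zpow_natCast, ← zpow_mul,
    zpow_le_zpow_iff_right₀ (one_lt_cast_prime p), zpow_le_zpow_iff_right₀ (one_lt_cast_prime p)]
  omega

lemma Padic.max_norm_sq_le_zpow_iff (u v : ℚ_[p]) (e : ℤ) :
    max ‖u‖ ‖v‖ ^ 2 ≤ (p : ℝ) ^ e ↔ ‖u‖ ≤ (p : ℝ) ^ (e / 2) ∧ ‖v‖ ≤ (p : ℝ) ^ (e / 2) := by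
  rw [← max_le_iff]
  rcases max_choice ‖u‖ ‖v‖ with h | h <;> rw [h] <;> exact Padic.norm_sq_le_zpow_iff _ e

lemma Padic.norm_sq_ne_inv_mul_norm_sq {u : ℚ_[p]} (hu : u ≠ 0) (w : ℚ_[p]) :
    ‖u‖ ^ 2 ≠ (p : ℝ)⁻¹ * ‖w‖ ^ 2 := by
  have hp : (0 : ℝ) < p := zero_lt_one.trans (one_lt_cast_prime p)
  rcases eq_or_ne w 0 with rfl | hw
  · simpa using hu
  rw [Padic.norm_eq_zpow_neg_valuation hu, Padic.norm_eq_zpow_neg_valuation hw, ← zpow_natCast,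
    ← zpow_natCast, ← zpow_mul, ← zpow_mul, ← zpow_neg_one, ← zpow_add₀ hp.ne']
  intro h
  have := zpow_right_injective₀ hp (one_lt_cast_prime p).ne' h
  omega

variable {a : ℤ}

lemma Padic.norm_sq_sub_intCast_eq_one (ha : ¬IsSquare (a : ZMod p)) {w : ℚ_[p]} (hw : ‖w‖ ≤ 1) :
    ‖w ^ 2 - a‖ = 1 := by
  obtain ⟨w, rfl⟩ : ∃ W : ℤ_[p], (W : ℚ_[p]) = w := ⟨⟨w, hw⟩, rfl⟩
  rw [show (w : ℚ_[p]) ^ 2 - a = ((w ^ 2 - a : ℤ_[p]) : ℚ_[p]) by push_cast; rfl,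
    PadicInt.padic_norm_e_of_padicInt, ← PadicInt.isUnit_iff]
  by_contra h
  have h0 : PadicInt.toZMod (w ^ 2 - (a : ℤ_[p])) = 0 := by
    rw [← RingHom.mem_ker, PadicInt.ker_toZMod]
    exact (IsLocalRing.mem_maximalIdeal _).2 h
  rw [map_sub, map_pow, map_intCast, sub_eq_zero] at h0
  exact ha ⟨PadicInt.toZMod w, by rw [← h0, sq]⟩

lemma Padic.norm_sq_sub_mul_sq (ha : ¬IsSquare (a : ZMod p)) (u v : ℚ_[p]) :
    ‖u ^ 2 - a * v ^ 2‖ = max ‖u‖ ‖v‖ ^ 2 := by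
  rcases lt_or_ge ‖v‖ ‖u‖ with h | h
  · have hlt : ‖(a : ℚ_[p]) * v ^ 2‖ < ‖u ^ 2‖ := by
      rw [norm_mul, norm_pow, norm_pow]
      calc ‖(a : ℚ_[p])‖ * ‖v‖ ^ 2 ≤ 1 * ‖v‖ ^ 2 := by gcongr; exact Padic.norm_int_le_one a
        _ < ‖u‖ ^ 2 := by rw [one_mul]; gcongr
    rw [sub_eq_add_neg, IsUltrametricDist.norm_add_eq_max_of_norm_ne_norm
      (by rw [norm_neg]; exact hlt.ne'), norm_neg, max_eq_left hlt.le, norm_pow, max_eq_left h.le]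
  · rcases eq_or_ne v 0 with rfl | hv
    · simp_all
    · have hw : ‖u / v‖ ≤ 1 := by rw [norm_div]; exact div_le_one_of_le₀ h (norm_nonneg _)
      rw [show u ^ 2 - a * v ^ 2 = v ^ 2 * ((u / v) ^ 2 - a) by field_simp, norm_mul,
        Padic.norm_sq_sub_intCast_eq_one ha hw, mul_one, norm_pow, max_eq_right h]

instance : (haarQ p).IsAddHaarMeasure := by unfold haarQ; infer_instance

instance (n : ℕ) : (haarQn p n).IsAddHaarMeasure := by unfold haarQn; infer_instance

lemma haarQ_closedBall_zpow_add_one (e : ℤ) :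
    haarQ p (closedBall 0 ((p : ℝ) ^ (e + 1))) = p * haarQ p (closedBall 0 ((p : ℝ) ^ e)) := by
  have hp : (p : ℝ) ≠ 0 := by exact_mod_cast (Fact.out : p.Prime).ne_zero
  set c : ℚ_[p] := (p : ℚ_[p]) ^ (-(e + 1)) with hc
  have hc0 : c ≠ 0 := zpow_ne_zero _ (by exact_mod_cast (Fact.out : p.Prime).ne_zero)
  have hcn : ‖c‖ = (p : ℝ) ^ (e + 1) := by
    rw [hc, norm_zpow, Padic.norm_p, inv_zpow', neg_neg]
  have hball : closedBall (0 : ℚ_[p]) ((p : ℝ) ^ (e + 1)) =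
      ⋃ j ∈ Finset.range p, c • closedBall (j : ℚ_[p]) (p : ℝ)⁻¹ := by
    rw [← Set.smul_set_iUnion₂, ← Padic.closedBall_zero_one_eq_biUnion,
      smul_closedBall c _ zero_le_one, smul_zero, hcn, mul_one]
  have hdisj : (Finset.range p : Set ℕ).PairwiseDisjoint
      fun j => c • closedBall (j : ℚ_[p]) (p : ℝ)⁻¹ := fun j hj j' hj' hne => by
    simpa only [← Set.image_smul, Function.onFun,
      Set.disjoint_image_iff (smul_right_injective ℚ_[p] hc0)] using
      Padic.pairwiseDisjoint_closedBall_natCast hj hj' hne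
  rw [hball, measure_biUnion_finset hdisj fun j _ => measurableSet_closedBall.const_smul₀ c]
  simp only [smul_closedBall c _ (inv_nonneg.2 (Nat.cast_nonneg p)),
    Measure.addHaar_closedBall_center, hcn, zpow_add_one₀ hp, mul_inv_cancel_right₀ hp,
    Finset.sum_const, Finset.card_range, nsmul_eq_mul]

lemma haarQ_closedBall_zpow (e : ℤ) :
    haarQ p (closedBall 0 ((p : ℝ) ^ e)) = ENNReal.ofReal ((p : ℝ) ^ e) := by
  have hp : p ≠ 0 := (Fact.out : p.Prime).ne_zero
  induction e using Int.induction_on with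
  | zero =>
    rw [zpow_zero, ENNReal.ofReal_one]
    exact Measure.addHaarMeasure_self
  | succ i ih =>
    rw [haarQ_closedBall_zpow_add_one, ih, ENNReal.ofReal_natCast_zpow_add_one hp]
  | pred i ih =>
    rw [← ENNReal.mul_right_inj (Nat.cast_ne_zero.2 hp) (ENNReal.natCast_ne_top p),
      ← haarQ_closedBall_zpow_add_one, ← ENNReal.ofReal_natCast_zpow_add_one hp, sub_add_cancel,
      ih]

lemma pi_haarQ_closedBall_zero_one (n : ℕ) :
    (Measure.pi fun _ : Fin n => haarQ p) (closedBall 0 1) = 1 := by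
  rw [closedBall_pi _ zero_le_one, Measure.pi_pi]
  simp only [Pi.zero_apply]
  rw [← zpow_zero (p : ℝ), haarQ_closedBall_zpow]
  simp

lemma haarQn_pi_closedBall_zpow {n : ℕ} (e : Fin n → ℤ) :
    haarQn p n (univ.pi fun i => closedBall 0 ((p : ℝ) ^ e i)) =
      ENNReal.ofReal ((p : ℝ) ^ ∑ i, e i) := by
  -- `haarQn` is defined on the Borel σ-algebra, which coincides with the product σ-algebra;
  -- there it is the product of copies of `haarQ` by uniqueness of Haar measure.
  suffices h : ∀ (m : MeasurableSpace (Fin n → ℚ_[p])) [BorelSpace (Fin n → ℚ_[p])]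
      (K₀ : TopologicalSpace.PositiveCompacts (Fin n → ℚ_[p])),
      (K₀ : Set (Fin n → ℚ_[p])) = closedBall 0 1 →
      Measure.addHaarMeasure K₀ (univ.pi fun i => closedBall 0 ((p : ℝ) ^ e i)) =
        ENNReal.ofReal ((p : ℝ) ^ ∑ i, e i) by
    exact h _ _ rfl
  intro m hm K₀ hK₀
  obtain rfl : m = MeasurableSpace.pi := hm.measurable_eq.trans Pi.borelSpace.measurable_eq.symm
  -- so that instance search picks the product σ-algebra, not the global Borel instance
  let _ : MeasurableSpace (Fin n → ℚ_[p]) := MeasurableSpace.pi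
  have hpi : Measure.pi (fun _ => haarQ p) = Measure.addHaarMeasure K₀ := by
    rw [Measure.addHaarMeasure_unique (Measure.pi fun _ => haarQ p) K₀, hK₀,
      pi_haarQ_closedBall_zero_one, one_smul]
  rw [← hpi, Measure.pi_pi]
  simp only [haarQ_closedBall_zpow]
  rw [← ENNReal.ofReal_prod_of_nonneg fun i _ => by positivity,
    Finset.prod_zpow_eq_zpow_sum (by exact_mod_cast (Fact.out : p.Prime).ne_zero)]

lemma continuous_Qf (a : ℤ) : Continuous (Qf p a) := by
  unfold Qf
  fun_prop

lemma norm_Qf (ha : ¬IsSquare (a : ZMod p)) (x : Fin 4 → ℚ_[p]) :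
    ‖Qf p a x‖ = max (max ‖x 0‖ ‖x 1‖ ^ 2) ((p : ℝ)⁻¹ * max ‖x 2‖ ‖x 3‖ ^ 2) := by
  have hsplit : Qf p a x = (x 0 ^ 2 - a * x 1 ^ 2) + -(p * (x 2 ^ 2 - a * x 3 ^ 2)) := by
    unfold Qf; ring
  have hA := Padic.norm_sq_sub_mul_sq ha (x 0) (x 1)
  have hB : ‖-((p : ℚ_[p]) * (x 2 ^ 2 - a * x 3 ^ 2))‖ = (p : ℝ)⁻¹ * max ‖x 2‖ ‖x 3‖ ^ 2 := by
    rw [norm_neg, norm_mul, Padic.norm_p, Padic.norm_sq_sub_mul_sq ha]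
  rw [hsplit, ← hA, ← hB]
  by_cases hne : ‖x 0 ^ 2 - a * x 1 ^ 2‖ = ‖-((p : ℚ_[p]) * (x 2 ^ 2 - a * x 3 ^ 2))‖
  · obtain ⟨u, hu⟩ : ∃ u, ‖u‖ = max ‖x 0‖ ‖x 1‖ :=
      (max_choice ‖x 0‖ ‖x 1‖).elim (fun h => ⟨x 0, h.symm⟩) (fun h => ⟨x 1, h.symm⟩)
    obtain ⟨w, hw⟩ : ∃ w, ‖w‖ = max ‖x 2‖ ‖x 3‖ :=
      (max_choice ‖x 2‖ ‖x 3‖).elim (fun h => ⟨x 2, h.symm⟩) (fun h => ⟨x 3, h.symm⟩)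
    have hu0 : u = 0 := by
      by_contra h
      exact Padic.norm_sq_ne_inv_mul_norm_sq h w (by rw [hu, hw, ← hA, ← hB, hne])
    have hA0 : ‖x 0 ^ 2 - a * x 1 ^ 2‖ = 0 := by rw [hA, ← hu, hu0, norm_zero, sq, mul_zero]
    rw [norm_eq_zero.1 hA0, norm_eq_zero.1 (hne.symm.trans hA0)]
    simp
  · exact IsUltrametricDist.norm_add_eq_max_of_norm_ne_norm hne

lemma Qf_eq_zero_iff (ha : ¬IsSquare (a : ZMod p)) (x : Fin 4 → ℚ_[p]) :
    Qf p a x = 0 ↔ x = 0 := by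
  refine ⟨fun h => ?_, fun h => by simp [h, Qf]⟩
  have hp : (0 : ℝ) < (p : ℝ)⁻¹ := inv_pos.2 (zero_lt_one.trans (one_lt_cast_prime p))
  have hp1 : (p : ℝ)⁻¹ ≤ 1 := inv_le_one_of_one_le₀ (one_lt_cast_prime p).le
  have hle : ∀ i, (p : ℝ)⁻¹ * ‖x i‖ ^ 2 ≤ ‖Qf p a x‖ := by
    intro i
    rw [norm_Qf ha]
    fin_cases i
    · exact le_max_of_le_left ((mul_le_of_le_one_left (by positivity) hp1).trans
        (pow_le_pow_left₀ (norm_nonneg _) (le_max_left _ _) 2))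
    · exact le_max_of_le_left ((mul_le_of_le_one_left (by positivity) hp1).trans
        (pow_le_pow_left₀ (norm_nonneg _) (le_max_right _ _) 2))
    · exact le_max_of_le_right (by gcongr; exact le_max_left _ _)
    · exact le_max_of_le_right (by gcongr; exact le_max_right _ _)
  funext i
  have hi := hle i
  rw [h, norm_zero] at hi
  exact norm_eq_zero.1 <| (pow_eq_zero_iff two_ne_zero).1 <|
    le_antisymm (nonpos_of_mul_nonpos_right hi hp) (by positivity)

-- `/` rounds down on `ℤ`: the radii are `p^(-⌈n/2⌉)` for `x₀, x₁` and `p^(-⌊n/2⌋)` for `x₂, x₃`.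
lemma norm_Qf_le_zpow_iff (ha : ¬IsSquare (a : ZMod p)) (n : ℕ) (x : Fin 4 → ℚ_[p]) :
    ‖Qf p a x‖ ≤ (p : ℝ) ^ (-(n : ℤ)) ↔
      x ∈ univ.pi fun i => closedBall 0
        ((p : ℝ) ^ ![-(n : ℤ) / 2, -(n : ℤ) / 2, (1 - n) / 2, (1 - n) / 2] i) := by
  have hp : (0 : ℝ) < p := zero_lt_one.trans (one_lt_cast_prime p)
  rw [norm_Qf ha, max_le_iff, inv_mul_le_iff₀ hp, ← zpow_one_add₀ hp.ne',
    Padic.max_norm_sq_le_zpow_iff, Padic.max_norm_sq_le_zpow_iff]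
  simp [Fin.forall_fin_succ, and_assoc, sub_eq_add_neg]

lemma norm_Qf_le_one_iff (ha : ¬IsSquare (a : ZMod p)) (x : Fin 4 → ℚ_[p]) :
    ‖Qf p a x‖ ≤ 1 ↔ x ∈ closedBall 0 1 := by
  simpa [pi_norm_le_iff_of_nonneg, Fin.forall_fin_succ] using norm_Qf_le_zpow_iff ha 0 x

lemma haarQn_norm_Qf_le_zpow (ha : ¬IsSquare (a : ZMod p)) (n : ℕ) :
    haarQn p 4 {x | ‖Qf p a x‖ ≤ (p : ℝ) ^ (-(n : ℤ))} = ENNReal.ofReal ((p : ℝ)⁻¹ ^ (2 * n)) := by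
  simp_rw [norm_Qf_le_zpow_iff ha, ofPred_mem_eq, haarQn_pi_closedBall_zpow, Fin.sum_univ_four]
  rw [inv_pow, ← zpow_natCast, ← zpow_neg]
  congr 2
  simp only [Matrix.cons_val, Nat.cast_mul, Nat.cast_ofNat]
  omega

lemma haarQn_real_norm_Qf_eq_zpow (ha : ¬IsSquare (a : ZMod p)) (n : ℕ) :
    (haarQn p 4).real ((‖Qf p a ·‖) ⁻¹' {(p : ℝ) ^ (-(n : ℤ))}) =
      (1 - (p : ℝ)⁻¹ ^ 2) * ((p : ℝ)⁻¹ ^ 2) ^ n := by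
  have hp1 : (p : ℝ)⁻¹ ≤ 1 := inv_le_one_of_one_le₀ (one_lt_cast_prime p).le
  have hsdiff : (‖Qf p a ·‖) ⁻¹' {(p : ℝ) ^ (-(n : ℤ))} =
      {x | ‖Qf p a x‖ ≤ (p : ℝ) ^ (-(n : ℤ))} \
        {x | ‖Qf p a x‖ ≤ (p : ℝ) ^ (-((n + 1 : ℕ) : ℤ))} := by
    ext x
    simp only [mem_preimage, mem_singleton_iff, Padic.norm_eq_zpow_iff, Set.mem_sdiff,
      mem_ofPred_eq]
    push_cast
    ring_nf
  have hsub : {x | ‖Qf p a x‖ ≤ (p : ℝ) ^ (-((n + 1 : ℕ) : ℤ))} ⊆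
      {x | ‖Qf p a x‖ ≤ (p : ℝ) ^ (-(n : ℤ))} :=
    fun x hx => le_trans hx (zpow_le_zpow_right₀ (one_lt_cast_prime p).le (by omega))
  rw [measureReal_def, hsdiff, measure_sdiff hsub
    (measurableSet_le (continuous_Qf a).norm.measurable measurable_const).nullMeasurableSet
    (by rw [haarQn_norm_Qf_le_zpow ha]; exact ENNReal.ofReal_ne_top),
    haarQn_norm_Qf_le_zpow ha, haarQn_norm_Qf_le_zpow ha,
    ENNReal.toReal_sub_of_le (ENNReal.ofReal_le_ofReal (pow_le_pow_of_le_one (by positivity) hp1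
      (by omega))) ENNReal.ofReal_ne_top,
    ENNReal.toReal_ofReal (by positivity), ENNReal.toReal_ofReal (by positivity)]
  ring

lemma closedBall_diff_zero_eq_iUnion_norm_Qf_eq (ha : ¬IsSquare (a : ZMod p)) :
    closedBall (0 : Fin 4 → ℚ_[p]) 1 \ {0} =
      ⋃ n : ℕ, (‖Qf p a ·‖) ⁻¹' {(p : ℝ) ^ (-(n : ℤ))} := by
  ext x
  simp only [Set.mem_sdiff, mem_singleton_iff, mem_iUnion, mem_preimage]
  rw [← norm_Qf_le_one_iff ha, ← Qf_eq_zero_iff ha x]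
  constructor
  · rintro ⟨h1, h0⟩
    exact Padic.exists_norm_eq_zpow_neg h0 h1
  · rintro ⟨n, hn⟩
    have hpos : 0 < ‖Qf p a x‖ := hn ▸ zpow_pos (zero_lt_one.trans (one_lt_cast_prime p)) _
    exact ⟨hn ▸ zpow_le_one_of_nonpos₀ (one_lt_cast_prime p).le (by omega), norm_pos_iff.1 hpos⟩

lemma setIntegral_norm_Qf_eq_zpow (ha : ¬IsSquare (a : ZMod p)) (α : ℂ) (n : ℕ) :
    ∫ x in (‖Qf p a ·‖) ⁻¹' {(p : ℝ) ^ (-(n : ℤ))}, (‖Qf p a x‖ : ℂ) ^ (α - 2) ∂haarQn p 4 =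
      (1 - (p : ℂ) ^ (-(2 : ℂ))) * ((p : ℂ) ^ (-α)) ^ n := by
  have hp : (p : ℂ) ≠ 0 := by exact_mod_cast (Fact.out : p.Prime).ne_zero
  have hpow : (p : ℂ) ^ α = (p : ℂ) ^ (α - 2) * (p : ℂ) ^ (2 : ℂ) := by
    rw [← Complex.cpow_add _ _ hp, sub_add_cancel]
  rw [setIntegral_congr_fun ((measurableSet_singleton _).preimage (continuous_Qf a).norm.measurable)
    (fun x (hx : ‖Qf p a x‖ = _) => by rw [hx]), setIntegral_const, haarQn_real_norm_Qf_eq_zpow ha,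
    Complex.ofReal_zpow_neg_natCast_cpow (Nat.cast_nonneg p), Complex.real_smul,
    Complex.cpow_neg, Complex.cpow_neg, hpow]
  push_cast
  simp only [Complex.cpow_ofNat, mul_inv, mul_pow, inv_pow]
  ring

lemma integrableOn_norm_Qf_cpow (ha : ¬IsSquare (a : ZMod p)) {s : ℂ} (hs : 0 ≤ s.re) :
    IntegrableOn (fun x => (‖Qf p a x‖ : ℂ) ^ s) (closedBall 0 1 \ {0}) (haarQn p 4) := by
  have hmeas : Measurable fun x => (‖Qf p a x‖ : ℂ) ^ s :=
    (Complex.measurable_ofReal.comp (continuous_Qf a).norm.measurable).pow_const s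
  refine Measure.integrableOn_of_bounded (M := 1)
    ((measure_mono sdiff_subset).trans_lt (isCompact_closedBall _ _).measure_lt_top).ne
    hmeas.aestronglyMeasurable
    (ae_restrict_of_forall_mem (measurableSet_closedBall.diff (measurableSet_singleton _))
      fun x hx => ?_)
  have hpos : 0 < ‖Qf p a x‖ := norm_pos_iff.2 ((Qf_eq_zero_iff ha x).not.2 hx.2)
  rw [Complex.norm_cpow_eq_rpow_re_of_pos hpos]
  exact Real.rpow_le_one hpos.le ((norm_Qf_le_one_iff ha x).2 hx.1) hs

end

theorem integral_over_Zp4_general (p : ℕ) [Fact p.Prime]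
    (a : ℤ) (ha : legendreSym p a = -1) (α : ℂ) (hα : 2 < α.re) :
    IntegrableOn (fun x : Fin 4 → ℚ_[p] => ((‖Qf p a x‖ : ℂ) ^ (α - 2)))
        (Metric.closedBall 0 1 \ {0}) (haarQn p 4) ∧
      ∫ x in Metric.closedBall (0 : Fin 4 → ℚ_[p]) 1 \ {0},
          ((‖Qf p a x‖ : ℂ) ^ (α - 2)) ∂haarQn p 4 =
        (1 - (p : ℂ) ^ (-(2 : ℂ))) / (1 - (p : ℂ) ^ (-α)) := by
  rw [legendreSym.eq_neg_one_iff] at ha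
  have hint := integrableOn_norm_Qf_cpow ha (s := α - 2)
    (by rw [Complex.sub_re, Complex.re_ofNat]; linarith)
  refine ⟨hint, ?_⟩
  have hq : ‖(p : ℂ) ^ (-α)‖ < 1 := by
    rw [Complex.norm_natCast_cpow_of_pos (Fact.out : p.Prime).pos, Complex.neg_re]
    exact Real.rpow_lt_one_of_one_lt_of_neg (one_lt_cast_prime p) (by linarith)
  have hinj : Function.Injective fun n : ℕ => (p : ℝ) ^ (-(n : ℤ)) := fun m n h => by
    have := zpow_right_injective₀ (zero_lt_one.trans (one_lt_cast_prime p))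
      (one_lt_cast_prime p).ne' h
    omega
  rw [closedBall_diff_zero_eq_iUnion_norm_Qf_eq ha] at hint ⊢
  rw [integral_iUnion
      (fun n => (measurableSet_singleton _).preimage (continuous_Qf a).norm.measurable)
      ((pairwise_disjoint_fiber _).comp_of_injective hinj) hint]
  simp_rw [setIntegral_norm_Qf_eq_zpow ha]
  rw [tsum_mul_left, tsum_geometric_of_norm_lt_one hq, div_eq_mul_inv]

/-- For `Re α > 2`, `Z(α) = ∫_{ℤ_p⁴∖{0}} |f(x)|_p^{α-2} d⁴x` converges and equals
`(1 - p^{-2})/(1 - p^{-α})`. -/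
theorem integral_over_Zp4 (p : ℕ) [Fact p.Prime] (hp : p ≠ 2)
    (a : ℤ) (ha : legendreSym p a = -1) (α : ℂ) (hα : 2 < α.re) :
    IntegrableOn (fun x : Fin 4 → ℚ_[p] => ((‖Qf p a x‖ : ℂ) ^ (α - 2)))
        (Metric.closedBall 0 1 \ {0}) (haarQn p 4) ∧
      ∫ x in Metric.closedBall (0 : Fin 4 → ℚ_[p]) 1 \ {0},
          ((‖Qf p a x‖ : ℂ) ^ (α - 2)) ∂haarQn p 4 =
        (1 - (p : ℂ) ^ (-(2 : ℂ))) / (1 - (p : ℂ) ^ (-α)) :=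
  integral_over_Zp4_general p a ha α hα
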